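/- Let G be a bipartite graph and uv an edge of G. Suppose G contains ℓ pairwise vertex-disjoint edges w_iz_i (1 ≤ i ≤ ℓ) such that each w_i ∈ N(v)∖{u}, each z_i ∈ N(u)∖{v}, and for every 2 ≤ i ≤ ℓ the 4-tuple (w_{i−1}, z_{i−1}, w_i, z_i) is rich. Then G contains C_{2ℓ}□K₂ as a subgraph. -/

import Mathlib

open SimpleGraph

/-- `F` has an (injective) copy in `G`. -/
def Contains {W V : Type*} (F : SimpleGraph W) (G : SimpleGraph V) : Prop :=
  ∃ f : W → V, Function.Injective f ∧ ∀ a b, F.Adj a b → G.Adj (f a) (f b)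

/-- The `2ℓ`-prism `C_{2ℓ} □ K₂`. -/
def prism (l : ℕ) : SimpleGraph (Fin (2 * l) × Fin 2) :=
  cycleGraph (2 * l) □ (⊤ : SimpleGraph (Fin 2))

/-- A 4-tuple `(w, z, w', z')` of distinct vertices is rich if `wz, w'z' ∈ E(G)` and
there are at least `4ℓ` pairwise vertex-disjoint edges `xy` with
`wx, xw', zy, yz' ∈ E(G)`. -/
def RichTuple {V : Type*} (G : SimpleGraph V) (l : ℕ) (w z w' z' : V) : Prop :=
  w ≠ z ∧ w ≠ w' ∧ w ≠ z' ∧ z ≠ w' ∧ z ≠ z' ∧ w' ≠ z' ∧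
  G.Adj w z ∧ G.Adj w' z' ∧
  ∃ S : Finset (V × V), 4 * l ≤ S.card ∧
    (∀ e ∈ S, ∀ f ∈ S, e ≠ f → e.1 ≠ f.1 ∧ e.1 ≠ f.2 ∧ e.2 ≠ f.1 ∧ e.2 ≠ f.2) ∧
    ∀ e ∈ S, G.Adj e.1 e.2 ∧ G.Adj w e.1 ∧ G.Adj e.1 w' ∧ G.Adj z e.2 ∧ G.Adj e.2 z'

lemma myExistsAvoid {V : Type*} [DecidableEq V] (S : Finset (V × V)) (F : Finset V)
    (hd : ∀ e ∈ S, ∀ f ∈ S, e ≠ f → e.1 ≠ f.1 ∧ e.1 ≠ f.2 ∧ e.2 ≠ f.1 ∧ e.2 ≠ f.2)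
    (hc : F.card < S.card) : ∃ e ∈ S, e.1 ∉ F ∧ e.2 ∉ F := by
  by_contra hcon
  push_neg at hcon
  have hmap : ∀ e ∈ S, (if e.1 ∈ F then e.1 else e.2) ∈ F := by
    intro e he
    by_cases h1 : e.1 ∈ F
    · simp [h1]
    · simpa [h1] using hcon e he h1
  have hinj : Set.InjOn (fun e : V × V => if e.1 ∈ F then e.1 else e.2) S := by
    intro e he f hf hef
    by_contra hne
    obtain ⟨h1, h2, h3, h4⟩ := hd e he f hf hne
    simp only at hef
    split_ifs at hef <;> tauto
  have := Finset.card_le_card_of_injOn _ hmap hinj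
  omega

lemma myCycleAdj {n : ℕ} (hn : 2 ≤ n) {p q : Fin n} (h : (cycleGraph n).Adj p q) :
    q.val = p.val + 1 ∨ p.val = q.val + 1 ∨ (p.val = 0 ∧ q.val = n - 1) ∨
      (q.val = 0 ∧ p.val = n - 1) := by
  rw [cycleGraph_adj'] at h
  have hp := p.isLt
  have hq := q.isLt
  rw [Fin.sub_def, Fin.sub_def] at h
  simp only at h
  rcases Nat.lt_or_ge (n - q.val + p.val) n with h1 | h1 <;>
  rcases Nat.lt_or_ge (n - p.val + q.val) n with h2 | h2 <;>
  [ rw [Nat.mod_eq_of_lt h1, Nat.mod_eq_of_lt h2] at h;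
    rw [Nat.mod_eq_of_lt h1, Nat.mod_eq_sub_mod h2, Nat.mod_eq_of_lt (by omega)] at h;
    rw [Nat.mod_eq_sub_mod h1, Nat.mod_eq_of_lt (by omega), Nat.mod_eq_of_lt h2] at h;
    rw [Nat.mod_eq_sub_mod h1, Nat.mod_eq_of_lt (by omega), Nat.mod_eq_sub_mod h2,
      Nat.mod_eq_of_lt (by omega)] at h] <;> omega

theorem myKey {V : Type*} [Fintype V] (l : ℕ) (hl : 2 ≤ l)
    (G : SimpleGraph V) (u v : V)
    (w z : Fin l → V)
    (hrich : ∀ i : ℕ, (h : i + 1 < l) →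
      RichTuple G l (w ⟨i, Nat.lt_of_succ_lt h⟩) (z ⟨i, Nat.lt_of_succ_lt h⟩) (w ⟨i + 1, h⟩) (z ⟨i + 1, h⟩)) :
    ∀ k (hk : k ≤ l - 1), ∃ c : ℕ → V × V,
      (∀ j (hj : j < k),
        G.Adj (c j).1 (c j).2 ∧
        G.Adj (w ⟨j, by omega⟩) ((c j).1) ∧ G.Adj ((c j).1) (w ⟨j + 1, by omega⟩) ∧
        G.Adj (z ⟨j, by omega⟩) ((c j).2) ∧ G.Adj ((c j).2) (z ⟨j + 1, by omega⟩) ∧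
        (c j).1 ≠ u ∧ (c j).1 ≠ v ∧ (c j).2 ≠ u ∧ (c j).2 ≠ v ∧
        (∀ i : Fin l, (c j).1 ≠ w i ∧ (c j).1 ≠ z i ∧ (c j).2 ≠ w i ∧ (c j).2 ≠ z i)) ∧
      (∀ j j', j < k → j' < k → j ≠ j' →
        (c j).1 ≠ (c j').1 ∧ (c j).1 ≠ (c j').2 ∧ (c j).2 ≠ (c j').1 ∧ (c j).2 ≠ (c j').2) := by
  classical
  intro k
  induction k with
  | zero =>
    intro _
    exact ⟨fun _ => (u, u), fun j hj => absurd hj (by omega),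
      fun j j' hj => absurd hj (by omega)⟩
  | succ k ih =>
    intro hk
    obtain ⟨c, hc1, hc2⟩ := ih (by omega)
    have hkl : k + 1 < l := by omega
    obtain ⟨-, -, -, -, -, -, -, -, S, hScard, hSdisj, hSmem⟩ := hrich k hkl
    set F : Finset V := (({u, v} : Finset V) ∪ Finset.univ.image w ∪ Finset.univ.image z ∪
      (Finset.range k).biUnion fun j => {(c j).1, (c j).2}) with hF
    have hFcard : F.card < S.card := by
      have h1 : (({u, v} : Finset V) ∪ Finset.univ.image w ∪ Finset.univ.image z).card
          ≤ 2 + l + l := by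
        refine le_trans (Finset.card_union_le _ _) ?_
        have := Finset.card_union_le (({u, v} : Finset V)) (Finset.univ.image w)
        have h2 := Finset.card_image_le (s := (Finset.univ : Finset (Fin l))) (f := w)
        have h3 := Finset.card_image_le (s := (Finset.univ : Finset (Fin l))) (f := z)
        have h4 : (({u, v} : Finset V)).card ≤ 2 :=
          le_trans (Finset.card_insert_le _ _) (by simp)
        simp only [Finset.card_univ, Fintype.card_fin] at h2 h3
        omega
      have h5 : ((Finset.range k).biUnion fun j => ({(c j).1, (c j).2} : Finset V)).card
          ≤ 2 * k := by
        refine le_trans (Finset.card_biUnion_le) ?_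
        refine le_trans (Finset.sum_le_sum (fun j _ => le_trans (Finset.card_insert_le _ _)
          (by simp : ({(c j).2} : Finset V).card + 1 ≤ 2))) ?_
        simp [Finset.sum_const, Finset.card_range, mul_comm]
      have := Finset.card_union_le
        ((({u, v} : Finset V) ∪ Finset.univ.image w ∪ Finset.univ.image z))
        ((Finset.range k).biUnion fun j => ({(c j).1, (c j).2} : Finset V))
      rw [← hF] at this
      omega
    obtain ⟨e, heS, he1, he2⟩ := myExistsAvoid S F hSdisj hFcard
    simp only [hF, Finset.mem_union, Finset.mem_insert, Finset.mem_singleton,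
      Finset.mem_image, Finset.mem_biUnion, Finset.mem_range, Finset.mem_univ, true_and,
      not_or, not_exists, not_and] at he1 he2
    obtain ⟨⟨⟨⟨he1u, he1v⟩, he1w⟩, he1z⟩, he1c⟩ := he1
    obtain ⟨⟨⟨⟨he2u, he2v⟩, he2w⟩, he2z⟩, he2c⟩ := he2
    refine ⟨fun j => if j = k then e else c j, ?_, ?_⟩
    · intro j hj
      by_cases hjk : j = k
      · simp only [hjk, if_pos rfl]
        obtain ⟨ha, hb, hc', hd, he⟩ := hSmem e heS
        refine ⟨ha, hb, hc', hd, he, he1u, he1v, he2u, he2v, fun i => ?_⟩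
        exact ⟨fun h => he1w i h.symm, fun h => he1z i h.symm,
          fun h => he2w i h.symm, fun h => he2z i h.symm⟩
      · simp only [if_neg hjk]
        exact hc1 j (by omega)
    · intro j j' hj hj' hjj'
      by_cases hjk : j = k <;> by_cases hj'k : j' = k
      · omega
      · have hj'' : j' < k := by omega
        simp only [hjk, if_pos rfl, if_neg hj'k]
        have a1 := he1c j' hj''
        have a2 := he2c j' hj''
        exact ⟨a1.1, a1.2, a2.1, a2.2⟩
      · have hj'' : j < k := by omega
        simp only [hj'k, if_pos rfl, if_neg hjk]
        have a1 := he1c j hj''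
        have a2 := he2c j hj''
        exact ⟨Ne.symm a1.1, Ne.symm a2.1, Ne.symm a1.2, Ne.symm a2.2⟩
      · simp only [if_neg hjk, if_neg hj'k]
        exact hc2 j j' (by omega) (by omega) hjj'

/-- If a bipartite graph `G` has an edge `uv` and `ℓ` pairwise vertex-disjoint edges
`w_i z_i` with `w_i ∈ N(v)∖{u}`, `z_i ∈ N(u)∖{v}` and `(w_{i-1},z_{i-1},w_i,z_i)` rich
for all `i ≥ 2`, then `G` contains `C_{2ℓ}□K₂`. -/
theorem prism_of_rich_tuples {V : Type*} [Fintype V] (l : ℕ) (hl : 2 ≤ l)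
    (G : SimpleGraph V) (hbip : G.Colorable 2) (u v : V) (huv : G.Adj u v)
    (w z : Fin l → V)
    (hwz : ∀ i, G.Adj (w i) (z i))
    (hw : ∀ i, G.Adj v (w i) ∧ w i ≠ u)
    (hz : ∀ i, G.Adj u (z i) ∧ z i ≠ v)
    (hdisj : ∀ i j, i ≠ j → w i ≠ w j ∧ w i ≠ z j ∧ z i ≠ z j)
    (hrich : ∀ i : ℕ, (h : i + 1 < l) →
      RichTuple G l (w ⟨i, by omega⟩) (z ⟨i, by omega⟩) (w ⟨i + 1, h⟩) (z ⟨i + 1, h⟩)) :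
    Contains (prism l) G := by
  classical
  obtain ⟨c, hc1, hc2⟩ := myKey l hl G u v w z hrich (l - 1) le_rfl
  have h2l : ∀ p : Fin (2 * l), p.val / 2 < l := fun p => by have := p.isLt; omega
  have hvu : v ≠ u := huv.ne'
  have hwv : ∀ i, w i ≠ v := fun i => ((hw i).1).ne'
  have hwu : ∀ i, w i ≠ u := fun i => (hw i).2
  have hzu : ∀ i, z i ≠ u := fun i => ((hz i).1).ne'
  have hzv : ∀ i, z i ≠ v := fun i => (hz i).2
  have hwzne : ∀ i j, w i ≠ z j := by
    intro i j
    by_cases h : i = j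
    · subst h; exact (hwz i).ne
    · exact (hdisj i j h).2.1
  have hadjc : ∀ j, j < l - 1 → G.Adj ((c j).1) ((c j).2) := fun j hj => (hc1 j hj).1
  have hcu1 : ∀ j, j < l - 1 → (c j).1 ≠ u := fun j hj => (hc1 j hj).2.2.2.2.2.1
  have hcv1 : ∀ j, j < l - 1 → (c j).1 ≠ v := fun j hj => (hc1 j hj).2.2.2.2.2.2.1
  have hcu2 : ∀ j, j < l - 1 → (c j).2 ≠ u := fun j hj => (hc1 j hj).2.2.2.2.2.2.2.1
  have hcv2 : ∀ j, j < l - 1 → (c j).2 ≠ v := fun j hj => (hc1 j hj).2.2.2.2.2.2.2.2.1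
  have hcw1 : ∀ j, j < l - 1 → ∀ i, (c j).1 ≠ w i :=
    fun j hj i => ((hc1 j hj).2.2.2.2.2.2.2.2.2 i).1
  have hcz1 : ∀ j, j < l - 1 → ∀ i, (c j).1 ≠ z i :=
    fun j hj i => ((hc1 j hj).2.2.2.2.2.2.2.2.2 i).2.1
  have hcw2 : ∀ j, j < l - 1 → ∀ i, (c j).2 ≠ w i :=
    fun j hj i => ((hc1 j hj).2.2.2.2.2.2.2.2.2 i).2.2.1
  have hcz2 : ∀ j, j < l - 1 → ∀ i, (c j).2 ≠ z i :=
    fun j hj i => ((hc1 j hj).2.2.2.2.2.2.2.2.2 i).2.2.2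
  have hadjwc : ∀ (i : Fin l) (j : ℕ), j < l - 1 → i.val = j → G.Adj (w i) ((c j).1) := by
    intro i j hj hij
    have hieq : i = ⟨j, by omega⟩ := Fin.ext hij
    rw [hieq]; exact (hc1 j hj).2.1
  have hadjcw : ∀ (i : Fin l) (j : ℕ), j < l - 1 → i.val = j + 1 → G.Adj ((c j).1) (w i) := by
    intro i j hj hij
    have hieq : i = ⟨j + 1, by omega⟩ := Fin.ext hij
    rw [hieq]; exact (hc1 j hj).2.2.1
  have hadjzc : ∀ (i : Fin l) (j : ℕ), j < l - 1 → i.val = j → G.Adj (z i) ((c j).2) := by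
    intro i j hj hij
    have hieq : i = ⟨j, by omega⟩ := Fin.ext hij
    rw [hieq]; exact (hc1 j hj).2.2.2.1
  have hadjcz : ∀ (i : Fin l) (j : ℕ), j < l - 1 → i.val = j + 1 → G.Adj ((c j).2) (z i) := by
    intro i j hj hij
    have hieq : i = ⟨j + 1, by omega⟩ := Fin.ext hij
    rw [hieq]; exact (hc1 j hj).2.2.2.2.1
  set f : Fin (2 * l) × Fin 2 → V := fun ps =>
    if ps.1.val = 0 then (if ps.2.val = 0 then v else u)
    else if ps.1.val % 2 = 1 then
      (if ps.2.val = 0 then w ⟨ps.1.val / 2, h2l ps.1⟩ else z ⟨ps.1.val / 2, h2l ps.1⟩)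
    else (if ps.2.val = 0 then (c (ps.1.val / 2 - 1)).1 else (c (ps.1.val / 2 - 1)).2)
    with hf
  have hf0v : ∀ (p : Fin (2 * l)) (s : Fin 2), p.val = 0 → s.val = 0 → f (p, s) = v := by
    intro p s h1 h2; simp [hf, h1, h2, show s = 0 from Fin.ext h2]
  have hf0u : ∀ (p : Fin (2 * l)) (s : Fin 2), p.val = 0 → s.val ≠ 0 → f (p, s) = u := by
    intro p s h1 h2; simp [hf, h1, h2, show s ≠ 0 by rintro rfl; exact h2 rfl]
  have hfw : ∀ (p : Fin (2 * l)) (s : Fin 2), p.val % 2 = 1 → s.val = 0 →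
      f (p, s) = w ⟨p.val / 2, h2l p⟩ := by
    intro p s h1 h2; simp [hf, h1, h2, show p.val ≠ 0 by omega, show s = 0 from Fin.ext h2]
  have hfz : ∀ (p : Fin (2 * l)) (s : Fin 2), p.val % 2 = 1 → s.val ≠ 0 →
      f (p, s) = z ⟨p.val / 2, h2l p⟩ := by
    intro p s h1 h2; simp [hf, h1, h2, show p.val ≠ 0 by omega, show s ≠ 0 by rintro rfl; exact h2 rfl]
  have hfc1 : ∀ (p : Fin (2 * l)) (s : Fin 2), p.val ≠ 0 → p.val % 2 ≠ 1 → s.val = 0 →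
      f (p, s) = (c (p.val / 2 - 1)).1 := by
    intro p s h1 h1' h2; simp [hf, h1, h1', h2, show s = 0 from Fin.ext h2]
  have hfc2 : ∀ (p : Fin (2 * l)) (s : Fin 2), p.val ≠ 0 → p.val % 2 ≠ 1 → s.val ≠ 0 →
      f (p, s) = (c (p.val / 2 - 1)).2 := by
    intro p s h1 h1' h2; simp [hf, h1, h1', h2, show s ≠ 0 by rintro rfl; exact h2 rfl]
  refine ⟨f, ?_, ?_⟩
  · rintro ⟨p, s⟩ ⟨q, t⟩ h
    have hps := p.isLt
    have hqs := q.isLt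
    have hss := s.isLt
    have hts := t.isLt
    rw [Prod.mk.injEq, Fin.ext_iff, Fin.ext_iff]
    simp only [hf] at h
    split_ifs at h
    all_goals first
      | (constructor <;> omega)
      | (exact absurd h hvu)
      | (exact absurd h (Ne.symm hvu))
      | (exact absurd h.symm (hwv _))
      | (exact absurd h (hwv _))
      | (exact absurd h.symm (hzv _))
      | (exact absurd h (hzv _))
      | (exact absurd h.symm (hwu _))
      | (exact absurd h (hwu _))
      | (exact absurd h.symm (hzu _))
      | (exact absurd h (hzu _))
      | (exact absurd h (hwzne _ _))
      | (exact absurd h.symm (hwzne _ _))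
      | (exact absurd h.symm (hcv1 _ (by omega)))
      | (exact absurd h (hcv1 _ (by omega)))
      | (exact absurd h.symm (hcv2 _ (by omega)))
      | (exact absurd h (hcv2 _ (by omega)))
      | (exact absurd h.symm (hcu1 _ (by omega)))
      | (exact absurd h (hcu1 _ (by omega)))
      | (exact absurd h.symm (hcu2 _ (by omega)))
      | (exact absurd h (hcu2 _ (by omega)))
      | (exact absurd h.symm (hcw1 _ (by omega) _))
      | (exact absurd h (hcw1 _ (by omega) _))
      | (exact absurd h.symm (hcw2 _ (by omega) _))
      | (exact absurd h (hcw2 _ (by omega) _))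
      | (exact absurd h.symm (hcz1 _ (by omega) _))
      | (exact absurd h (hcz1 _ (by omega) _))
      | (exact absurd h.symm (hcz2 _ (by omega) _))
      | (exact absurd h (hcz2 _ (by omega) _))
      | (rcases eq_or_ne (p.val / 2) (q.val / 2) with hi | hi
         · exact ⟨by omega, by omega⟩
         · exact absurd h (hdisj _ _ (Fin.ne_of_val_ne hi)).1)
      | (rcases eq_or_ne (p.val / 2) (q.val / 2) with hi | hi
         · exact ⟨by omega, by omega⟩
         · exact absurd h (hdisj _ _ (Fin.ne_of_val_ne hi)).2.2)
      | (rcases eq_or_ne (p.val / 2) (q.val / 2) with hi | hi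
         · exact ⟨by omega, by omega⟩
         · exact absurd h (hc2 _ _ (by omega) (by omega) (by omega)).1)
      | (rcases eq_or_ne (p.val / 2) (q.val / 2) with hi | hi
         · exact ⟨by omega, by omega⟩
         · exact absurd h (hc2 _ _ (by omega) (by omega) (by omega)).2.2.2)
      | (rcases eq_or_ne (p.val / 2) (q.val / 2) with hi | hi
         · rw [show q.val / 2 - 1 = p.val / 2 - 1 by omega] at h
           exact absurd h (hadjc _ (by omega)).ne
         · exact absurd h (hc2 _ _ (by omega) (by omega) (by omega)).2.1)
      | (rcases eq_or_ne (p.val / 2) (q.val / 2) with hi | hi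
         · rw [show q.val / 2 - 1 = p.val / 2 - 1 by omega] at h
           exact absurd h (hadjc _ (by omega)).ne'
         · exact absurd h (hc2 _ _ (by omega) (by omega) (by omega)).2.2.1)
  · rintro ⟨p, s⟩ ⟨q, t⟩ hab
    simp only [prism, boxProd_adj, top_adj] at hab
    have hps := p.isLt
    have hqs := q.isLt
    have hss := s.isLt
    have hts := t.isLt
    rcases hab with ⟨hcyc, rfl⟩ | ⟨hst, rfl⟩
    · -- cycle edge, same side s
      have h4 := myCycleAdj (by omega) hcyc
      rcases eq_or_ne s.val 0 with hs0 | hs0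
      · -- side 0
        rcases h4 with h4 | h4 | ⟨h4a, h4b⟩ | ⟨h4a, h4b⟩
        · rcases eq_or_ne p.val 0 with hp0 | hp0
          · rw [hf0v p s hp0 hs0, hfw q s (by omega) hs0]
            exact (hw _).1
          · rcases eq_or_ne (p.val % 2) 1 with hp1 | hp1
            · rw [hfw p s hp1 hs0, hfc1 q s (by omega) (by omega) hs0]
              exact hadjwc _ _ (by omega) (by dsimp only; omega)
            · rw [hfc1 p s hp0 hp1 hs0, hfw q s (by omega) hs0]
              exact hadjcw _ _ (by omega) (by dsimp only; omega)
        · rcases eq_or_ne q.val 0 with hq0 | hq0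
          · rw [hf0v q s hq0 hs0, hfw p s (by omega) hs0]
            exact ((hw _).1).symm
          · rcases eq_or_ne (q.val % 2) 1 with hq1 | hq1
            · rw [hfw q s hq1 hs0, hfc1 p s (by omega) (by omega) hs0]
              exact (hadjwc _ _ (by omega) (by dsimp only; omega)).symm
            · rw [hfc1 q s hq0 hq1 hs0, hfw p s (by omega) hs0]
              exact (hadjcw _ _ (by omega) (by dsimp only; omega)).symm
        · rw [hf0v p s h4a hs0, hfw q s (by omega) hs0]
          exact (hw _).1
        · rw [hf0v q s h4a hs0, hfw p s (by omega) hs0]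
          exact ((hw _).1).symm
      · -- side 1
        rcases h4 with h4 | h4 | ⟨h4a, h4b⟩ | ⟨h4a, h4b⟩
        · rcases eq_or_ne p.val 0 with hp0 | hp0
          · rw [hf0u p s hp0 hs0, hfz q s (by omega) hs0]
            exact (hz _).1
          · rcases eq_or_ne (p.val % 2) 1 with hp1 | hp1
            · rw [hfz p s hp1 hs0, hfc2 q s (by omega) (by omega) hs0]
              exact hadjzc _ _ (by omega) (by dsimp only; omega)
            · rw [hfc2 p s hp0 hp1 hs0, hfz q s (by omega) hs0]
              exact hadjcz _ _ (by omega) (by dsimp only; omega)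
        · rcases eq_or_ne q.val 0 with hq0 | hq0
          · rw [hf0u q s hq0 hs0, hfz p s (by omega) hs0]
            exact ((hz _).1).symm
          · rcases eq_or_ne (q.val % 2) 1 with hq1 | hq1
            · rw [hfz q s hq1 hs0, hfc2 p s (by omega) (by omega) hs0]
              exact (hadjzc _ _ (by omega) (by dsimp only; omega)).symm
            · rw [hfc2 q s hq0 hq1 hs0, hfz p s (by omega) hs0]
              exact (hadjcz _ _ (by omega) (by dsimp only; omega)).symm
        · rw [hf0u p s h4a hs0, hfz q s (by omega) hs0]
          exact (hz _).1
        · rw [hf0u q s h4a hs0, hfz p s (by omega) hs0]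
          exact ((hz _).1).symm
    · -- matching edge: p = q (renamed), s ≠ t
      have hstv : s.val ≠ t.val := fun hh => hst (Fin.ext hh)
      rcases eq_or_ne s.val 0 with hs0 | hs0
      · have ht0 : t.val ≠ 0 := by omega
        rcases eq_or_ne p.val 0 with hp0 | hp0
        · rw [hf0v p s hp0 hs0, hf0u p t hp0 ht0]
          exact huv.symm
        · rcases eq_or_ne (p.val % 2) 1 with hp1 | hp1
          · rw [hfw p s hp1 hs0, hfz p t hp1 ht0]
            exact hwz _
          · rw [hfc1 p s hp0 hp1 hs0, hfc2 p t hp0 hp1 ht0]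
            exact hadjc _ (by omega)
      · have ht0 : t.val = 0 := by omega
        rcases eq_or_ne p.val 0 with hp0 | hp0
        · rw [hf0u p s hp0 hs0, hf0v p t hp0 ht0]
          exact huv
        · rcases eq_or_ne (p.val % 2) 1 with hp1 | hp1
          · rw [hfz p s hp1 hs0, hfw p t hp1 ht0]
            exact (hwz _).symm
          · rw [hfc2 p s hp0 hp1 hs0, hfc1 p t hp0 hp1 ht0]
            exact (hadjc _ (by omega)).symm
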